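/- arXiv:1907.01994 — 2 statements merged into one kernel-verified Lean document; each statement's English description precedes it below -/
import Mathlib

section
/- For every N ∈ ℕ and every ξ ∈ H_N, the Galerkin–Euler drift satisfies the reality condition b_N(ξ)_{−n} = conj(b_N(ξ)_n) for all n ∈ Λ_N (so that b_N maps H_N into H_N), and it is orthogonal to the state: Re ∑_{n∈Λ_N} b_N(ξ)_n conj(ξ_n) = 0. -/
/-- `Λ_N = {k ∈ ℤ² ∖ {0} : max(|k₁|, |k₂|) ≤ N}`. -/
noncomputable def Lam (N : ℕ) : Finset (ℤ × ℤ) :=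
  (Finset.Icc (-(N : ℤ), -(N : ℤ)) ((N : ℤ), (N : ℤ))).erase (0, 0)

/-- The Galerkin–Euler drift, componentwise:
`b_N(ξ)_n = − ∑_{k ∈ Λ_N, n−k ∈ Λ_N} ((k^⊥ · n)/|k|²) ξ_k ξ_{n−k}`,
where `k^⊥ = (k₂, −k₁)`. -/
noncomputable def bN (N : ℕ) (ξ : ℤ × ℤ → ℂ) (n : ℤ × ℤ) : ℂ :=
  -∑ k ∈ (Lam N).filter (fun k => n - k ∈ Lam N),
    (((k.2 * n.1 - k.1 * n.2 : ℤ) : ℂ) / ((k.1 ^ 2 + k.2 ^ 2 : ℤ) : ℂ)) * ξ k * ξ (n - k)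

lemma mem_Lam_iff {N : ℕ} {k : ℤ × ℤ} :
    k ∈ Lam N ↔ k ≠ (0,0) ∧ -(N:ℤ) ≤ k.1 ∧ k.1 ≤ N ∧ -(N:ℤ) ≤ k.2 ∧ k.2 ≤ N := by
  simp only [Lam, Finset.mem_erase, Finset.mem_Icc, Prod.le_def]
  constructor
  · rintro ⟨h0, ⟨a,b⟩, c, d⟩; exact ⟨by simpa using h0, a, c, b, d⟩
  · rintro ⟨h0, a, b, c, d⟩; exact ⟨by simpa using h0, ⟨a,c⟩, b, d⟩

lemma neg_mem_Lam {N : ℕ} {k : ℤ × ℤ} (h : k ∈ Lam N) : -k ∈ Lam N := by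
  rw [mem_Lam_iff] at h ⊢
  obtain ⟨h0, h1⟩ := h
  refine ⟨?_, ?_⟩
  · intro hc
    apply h0
    have : k = -(-k) := by ring
    rw [this, hc]
    rfl
  · simp only [Prod.fst_neg, Prod.snd_neg]
    omega

theorem stmt0 (N : ℕ) (ξ : ℤ × ℤ → ℂ)
    (hreal : ∀ k ∈ Lam N, ξ (-k) = (starRingEnd ℂ) (ξ k)) :
    (∀ n ∈ Lam N, bN N ξ (-n) = (starRingEnd ℂ) (bN N ξ n)) ∧
    (∑ n ∈ Lam N, bN N ξ n * (starRingEnd ℂ) (ξ n)).re = 0 := by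
  constructor
  · intro n hn
    unfold bN
    rw [map_neg, map_sum, neg_inj]
    refine Finset.sum_nbij' (fun k => -k) (fun k => -k) ?_ ?_ (fun a _ => neg_neg a)
      (fun a _ => neg_neg a) ?_
    · intro k hk
      simp only [Finset.mem_filter] at hk ⊢
      refine ⟨neg_mem_Lam hk.1, ?_⟩
      have : n - -k = -(-n - k) := by ring
      rw [this]
      exact neg_mem_Lam hk.2
    · intro k hk
      simp only [Finset.mem_filter] at hk ⊢
      refine ⟨neg_mem_Lam hk.1, ?_⟩
      have : -n - -k = -(n - k) := by ring
      rw [this]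
      exact neg_mem_Lam hk.2
    · intro a ha
      simp only [Finset.mem_filter] at ha
      have hnpa : n + a ∈ Lam N := by
        have h := neg_mem_Lam ha.2
        rwa [show -(-n - a) = n + a by ring] at h
      have e1 : (starRingEnd ℂ) (ξ (-a)) = ξ a := by
        rw [← hreal (-a) (neg_mem_Lam ha.1), neg_neg]
      have e2 : (starRingEnd ℂ) (ξ (n - -a)) = ξ (-n - a) := by
        rw [show n - -a = n + a by ring, ← hreal (n + a) hnpa,
          show -(n + a) = -n - a by ring]
      rw [map_mul, map_mul, e1, e2, map_div₀, map_intCast, map_intCast]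
      simp only [Prod.fst_neg, Prod.snd_neg]
      push_cast
      ring
  · have key : (∑ n ∈ Lam N, bN N ξ n * (starRingEnd ℂ) (ξ n)) = 0 := by
      have step1 : ∀ n ∈ Lam N, bN N ξ n * (starRingEnd ℂ) (ξ n) =
          -∑ k ∈ (Lam N).filter (fun k => n - k ∈ Lam N),
            (((k.2 * n.1 - k.1 * n.2 : ℤ) : ℂ) / ((k.1 ^ 2 + k.2 ^ 2 : ℤ) : ℂ)) *
              ξ k * ξ (n - k) * ξ (-n) := by
        intro n hn
        rw [← hreal n hn]
        unfold bN
        rw [neg_mul, Finset.sum_mul]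
      rw [Finset.sum_congr rfl step1]
      rw [Finset.sum_neg_distrib, neg_eq_zero]
      set g : (ℤ × ℤ) × (ℤ × ℤ) → ℂ := fun x =>
        (((x.2.2 * x.1.1 - x.2.1 * x.1.2 : ℤ) : ℂ) / ((x.2.1 ^ 2 + x.2.2 ^ 2 : ℤ) : ℂ)) *
          ξ x.2 * ξ (x.1 - x.2) * ξ (-x.1) with hg
      have hstep2 : ∑ n ∈ Lam N, ∑ k ∈ (Lam N).filter (fun k => n - k ∈ Lam N),
          (((k.2 * n.1 - k.1 * n.2 : ℤ) : ℂ) / ((k.1 ^ 2 + k.2 ^ 2 : ℤ) : ℂ)) *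
            ξ k * ξ (n - k) * ξ (-n)
          = ∑ x ∈ ((Lam N) ×ˢ (Lam N)).filter (fun x => x.1 - x.2 ∈ Lam N), g x := by
        rw [Finset.sum_filter, Finset.sum_product]
        refine Finset.sum_congr rfl fun n _ => ?_
        rw [Finset.sum_filter]
      rw [hstep2]
      refine Finset.sum_involution (fun x _ => (x.2 - x.1, x.2)) ?_ ?_ ?_ ?_
      · intro x hx
        obtain ⟨n, k⟩ := x
        simp only [hg]
        have r1 : (k - n) - k = -n := by ring
        have r2 : -(k - n) = n - k := by ring
        rw [r1, r2]
        simp only [Prod.fst_sub, Prod.snd_sub]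
        push_cast
        ring
      · intro x hx hne
        intro hc
        apply hne
        have h2 : g x + g (x.2 - x.1, x.2) = 0 := by
          obtain ⟨n, k⟩ := x
          simp only [hg]
          have r1 : (k - n) - k = -n := by ring
          have r2 : -(k - n) = n - k := by ring
          rw [r1, r2]
          simp only [Prod.fst_sub, Prod.snd_sub]
          push_cast
          ring
        rw [hc] at h2
        exact add_self_eq_zero.mp h2
      · intro x hx
        simp only [Finset.mem_filter, Finset.mem_product] at hx ⊢
        obtain ⟨⟨hn, hk⟩, hnk⟩ := hx
        refine ⟨⟨?_, hk⟩, ?_⟩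
        · have h := neg_mem_Lam hnk
          rwa [show -(x.1 - x.2) = x.2 - x.1 by ring] at h
        · have h := neg_mem_Lam hn
          rwa [show (x.2 - x.1) - x.2 = -x.1 by ring]
      · intro x hx
        show (x.2 - (x.2 - x.1), x.2) = x
        have : x.2 - (x.2 - x.1) = x.1 := by ring
        rw [this]
    rw [key]
    simp
end

section
/- The Mehler semigroup contracts relative entropy with respect to the standard Gaussian measure: for every nonnegative bounded measurable ρ : ℝ^d → ℝ and every t > 0, ∫_{ℝ^d} (P_t ρ) log(P_t ρ) dμ ≤ ∫_{ℝ^d} ρ log ρ dμ, with the convention 0·log 0 = 0. -/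
open MeasureTheory Real
open scoped NNReal ENNReal

/-- The standard Gaussian measure on `ℝ^d`. -/
noncomputable def stdGauss (d : ℕ) : Measure (EuclideanSpace ℝ (Fin d)) :=
  volume.withDensity fun ξ =>
    ENNReal.ofReal ((2 * π) ^ (-(d : ℝ) / 2) * Real.exp (-‖ξ‖ ^ 2 / 2))

/-- The Ornstein–Uhlenbeck (Mehler) semigroup on `ℝ^d`. -/
noncomputable def mehler (d : ℕ) (t : ℝ) (ρ : EuclideanSpace ℝ (Fin d) → ℝ)
    (ξ : EuclideanSpace ℝ (Fin d)) : ℝ :=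
  (2 * π * (1 - Real.exp (-2 * t))) ^ (-(d : ℝ) / 2) *
    ∫ η, ρ η * Real.exp (-‖η - Real.exp (-t) • ξ‖ ^ 2 / (2 * (1 - Real.exp (-2 * t))))

/- With the convention `Real.log 0 = 0`, the function `s ↦ s * Real.log s`
implements `s log s` with `0 · log 0 = 0`. -/

lemma aux_integrable_gauss {d : ℕ} {s : ℝ} (hs : 0 < s) (w : EuclideanSpace ℝ (Fin d)) :
    Integrable (fun η : EuclideanSpace ℝ (Fin d) => rexp (-‖η - w‖ ^ 2 / (2 * s))) := by
  have hb : (0:ℝ) < 1 / (2 * s) := by positivity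
  have h1 : Integrable (fun η : EuclideanSpace ℝ (Fin d) => rexp (-(1 / (2 * s)) * ‖η‖ ^ 2)) := by
    have := (GaussianFourier.integrable_cexp_neg_mul_sq_norm_add (V := EuclideanSpace ℝ (Fin d))
      (b := ((1 / (2 * s) : ℝ) : ℂ)) (by simpa using hb) 0 0).norm
    refine this.congr (Filter.Eventually.of_forall fun v => ?_)
    simp [Complex.norm_exp]
    left; norm_cast
  have h2 := h1.comp_sub_right w
  refine h2.congr (Filter.Eventually.of_forall fun v => ?_)
  simp only
  congr 1
  ring

lemma aux_integral_gauss {d : ℕ} {s : ℝ} (hs : 0 < s) (w : EuclideanSpace ℝ (Fin d)) :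
    ∫ η : EuclideanSpace ℝ (Fin d), rexp (-‖η - w‖ ^ 2 / (2 * s)) =
      (2 * π * s) ^ ((d : ℝ) / 2) := by
  have hb : (0:ℝ) < 1 / (2 * s) := by positivity
  have h0 : (fun η : EuclideanSpace ℝ (Fin d) => rexp (-‖η - w‖ ^ 2 / (2 * s))) =
      fun η => (fun x : EuclideanSpace ℝ (Fin d) => rexp (-(1 / (2 * s)) * ‖x‖ ^ 2)) (η - w) := by
    funext η
    simp only
    congr 1
    ring
  rw [h0, integral_sub_right_eq_self (μ := volume)
    (fun x : EuclideanSpace ℝ (Fin d) => rexp (-(1 / (2 * s)) * ‖x‖ ^ 2)) w,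
    GaussianFourier.integral_rexp_neg_mul_sq_norm hb, finrank_euclideanSpace_fin]
  congr 1
  rw [div_div_eq_mul_div, mul_comm π (2*s), div_one]
  ring

/-- The Mehler kernel density. -/
noncomputable def kern (d : ℕ) (c s2 : ℝ) (ξ η : EuclideanSpace ℝ (Fin d)) : ℝ :=
  (2 * π * s2) ^ (-(d : ℝ) / 2) * rexp (-‖η - c • ξ‖ ^ 2 / (2 * s2))

lemma kern_nonneg {d : ℕ} {c s2 : ℝ} (hs : 0 < s2) (ξ η : EuclideanSpace ℝ (Fin d)) :
    0 ≤ kern d c s2 ξ η := by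
  unfold kern; positivity

lemma kern_integrable {d : ℕ} {c s2 : ℝ} (hs : 0 < s2) (ξ : EuclideanSpace ℝ (Fin d)) :
    Integrable (fun η => kern d c s2 ξ η) :=
  (aux_integrable_gauss hs (c • ξ)).const_mul _

lemma kern_norm {d : ℕ} {c s2 : ℝ} (hs : 0 < s2) (ξ : EuclideanSpace ℝ (Fin d)) :
    ∫ η, kern d c s2 ξ η = 1 := by
  unfold kern
  rw [integral_const_mul, aux_integral_gauss hs (c • ξ), ← Real.rpow_add (by positivity)]
  rw [show -(d : ℝ) / 2 + (d : ℝ) / 2 = 0 by ring, Real.rpow_zero]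

lemma aux_sq {d : ℕ} {c s2 : ℝ} (hs : 0 < s2) (hc2 : c ^ 2 = 1 - s2)
    (ξ η : EuclideanSpace ℝ (Fin d)) :
    rexp (-‖ξ‖ ^ 2 / 2) * rexp (-‖η - c • ξ‖ ^ 2 / (2 * s2)) =
      rexp (-‖η‖ ^ 2 / 2) * rexp (-‖ξ - c • η‖ ^ 2 / (2 * s2)) := by
  rw [← Real.exp_add, ← Real.exp_add]
  congr 1
  have h1 : ‖η - c • ξ‖ ^ 2 = ‖η‖ ^ 2 - 2 * (c * (inner ℝ η ξ : ℝ)) + c ^ 2 * ‖ξ‖ ^ 2 := by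
    rw [norm_sub_sq_real, real_inner_smul_right, norm_smul]
    simp [mul_pow, sq_abs]
  have h2 : ‖ξ - c • η‖ ^ 2 = ‖ξ‖ ^ 2 - 2 * (c * (inner ℝ η ξ : ℝ)) + c ^ 2 * ‖η‖ ^ 2 := by
    rw [norm_sub_sq_real, real_inner_smul_right, norm_smul, real_inner_comm]
    simp [mul_pow, sq_abs]
  rw [h1, h2, hc2]
  field_simp
  ring

lemma aux_gk {d : ℕ} {c s2 : ℝ} (hs : 0 < s2) (hc2 : c ^ 2 = 1 - s2)
    (ξ η : EuclideanSpace ℝ (Fin d)) :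
    ((2 * π) ^ (-(d : ℝ) / 2) * rexp (-‖ξ‖ ^ 2 / 2)) * kern d c s2 ξ η =
      ((2 * π) ^ (-(d : ℝ) / 2) * rexp (-‖η‖ ^ 2 / 2)) * kern d c s2 η ξ := by
  unfold kern
  rw [mul_mul_mul_comm, aux_sq hs hc2 ξ η, ← mul_mul_mul_comm]

lemma aux_wd {d : ℕ} (f : EuclideanSpace ℝ (Fin d) → ℝ) (hf : Measurable f)
    (hfnn : ∀ x, 0 ≤ f x) (g : EuclideanSpace ℝ (Fin d) → ℝ) :
    ∫ x, g x ∂(volume.withDensity fun x => ENNReal.ofReal (f x)) = ∫ x, f x * g x := by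
  have h : (fun x => ENNReal.ofReal (f x)) = fun x => (((f x).toNNReal : ℝ≥0) : ℝ≥0∞) := rfl
  rw [h, integral_withDensity_eq_integral_smul (by exact hf.real_toNNReal) g]
  congr 1
  funext x
  simp [NNReal.smul_def, Real.coe_toNNReal _ (hfnn x)]

lemma aux_prob {d : ℕ} (f : EuclideanSpace ℝ (Fin d) → ℝ) (hf : Measurable f)
    (hfnn : ∀ x, 0 ≤ f x) (hfi : Integrable f) (hnorm : ∫ x, f x = 1) :
    IsProbabilityMeasure (volume.withDensity fun x => ENNReal.ofReal (f x)) := by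
  constructor
  rw [withDensity_apply _ MeasurableSet.univ, setLIntegral_univ,
    ← ofReal_integral_eq_lintegral_ofReal hfi (Filter.Eventually.of_forall hfnn), hnorm,
    ENNReal.ofReal_one]

/-- The OU semigroup written with respect to the kernel `kern`. -/
noncomputable def ou (d : ℕ) (c s2 : ℝ) (g : EuclideanSpace ℝ (Fin d) → ℝ)
    (ξ : EuclideanSpace ℝ (Fin d)) : ℝ :=
  ∫ η, kern d c s2 ξ η * g η

lemma kern_cont {d : ℕ} (c s2 : ℝ) :
    Continuous fun p : EuclideanSpace ℝ (Fin d) × EuclideanSpace ℝ (Fin d) =>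
      kern d c s2 p.1 p.2 := by
  unfold kern
  fun_prop

lemma key (d : ℕ) (ρ : EuclideanSpace ℝ (Fin d) → ℝ) (hmeas : Measurable ρ)
    (hpos : ∀ ξ, 0 ≤ ρ ξ) (C : ℝ) (hC : ∀ ξ, |ρ ξ| ≤ C)
    (c s2 : ℝ) (hs2 : 0 < s2) (hc2 : c ^ 2 = 1 - s2) :
    ∫ ξ, ou d c s2 ρ ξ * Real.log (ou d c s2 ρ ξ) ∂(stdGauss d) ≤
      ∫ ξ, ρ ξ * Real.log (ρ ξ) ∂(stdGauss d) := by
  classical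
  have hC0 : 0 ≤ C := le_trans (abs_nonneg _) (hC 0)
  set γ : EuclideanSpace ℝ (Fin d) → ℝ :=
    fun ξ => (2 * π) ^ (-(d : ℝ) / 2) * rexp (-‖ξ‖ ^ 2 / 2) with hγdef
  have hγcont : Continuous γ := by rw [hγdef]; fun_prop
  have hγnn : ∀ ξ, 0 ≤ γ ξ := fun ξ => by rw [hγdef]; positivity
  have hγeq : γ = fun η => kern d 0 1 0 η := by
    funext η; rw [hγdef]; unfold kern; simp
  have hγint : Integrable γ := by
    rw [hγeq]; exact kern_integrable one_pos 0
  have hγnorm : ∫ ξ, γ ξ = 1 := by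
    rw [hγeq]; exact kern_norm one_pos 0
  have hsg : ∀ g : EuclideanSpace ℝ (Fin d) → ℝ,
      ∫ x, g x ∂(stdGauss d) = ∫ x, γ x * g x := by
    intro g
    unfold stdGauss
    exact aux_wd γ hγcont.measurable hγnn g
  haveI : IsProbabilityMeasure (stdGauss d) := by
    unfold stdGauss
    exact aux_prob γ hγcont.measurable hγnn hγint hγnorm
  have hkmeas : ∀ ξ, Measurable (kern d c s2 ξ) := by
    intro ξ
    exact ((kern_cont c s2).comp (Continuous.prodMk_right ξ)).measurable
  set ν : EuclideanSpace ℝ (Fin d) → Measure (EuclideanSpace ℝ (Fin d)) :=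
    fun ξ => volume.withDensity fun η => ENNReal.ofReal (kern d c s2 ξ η) with hνdef
  have hνprob : ∀ ξ, IsProbabilityMeasure (ν ξ) := fun ξ =>
    aux_prob _ (hkmeas ξ) (kern_nonneg hs2 ξ) (kern_integrable hs2 ξ) (kern_norm hs2 ξ)
  have hνint : ∀ (ξ) (g : EuclideanSpace ℝ (Fin d) → ℝ),
      ∫ η, g η ∂(ν ξ) = ou d c s2 g ξ := fun ξ g =>
    aux_wd _ (hkmeas ξ) (kern_nonneg hs2 ξ) g
  -- bound for s * log s on [0, C]
  obtain ⟨M, hM⟩ := (isCompact_Icc (a := (0:ℝ)) (b := C)).exists_bound_of_continuousOn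
    Real.continuous_mul_log.continuousOn
  have hρmem : ∀ η, ρ η ∈ Set.Icc (0:ℝ) C := fun η => ⟨hpos η, (abs_le.mp (hC η)).2⟩
  have hφρ_bd : ∀ η, ‖ρ η * Real.log (ρ η)‖ ≤ M := fun η => hM _ (hρmem η)
  have hφρ_meas : Measurable fun η => ρ η * Real.log (ρ η) :=
    hmeas.mul (Real.measurable_log.comp hmeas)
  have hρint : ∀ ξ, Integrable ρ (ν ξ) := by
    intro ξ
    haveI := hνprob ξ
    exact (integrable_const C).mono' hmeas.aestronglyMeasurable
      (Filter.Eventually.of_forall fun η => by rw [Real.norm_eq_abs]; exact hC η)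
  have hφρint : ∀ ξ, Integrable (fun η => ρ η * Real.log (ρ η)) (ν ξ) := by
    intro ξ
    haveI := hνprob ξ
    exact (integrable_const M).mono' hφρ_meas.aestronglyMeasurable
      (Filter.Eventually.of_forall hφρ_bd)
  have hou_meas : ∀ g : EuclideanSpace ℝ (Fin d) → ℝ, Measurable g →
      StronglyMeasurable (ou d c s2 g) := by
    intro g hg
    have hu : StronglyMeasurable
        (fun p : EuclideanSpace ℝ (Fin d) × EuclideanSpace ℝ (Fin d) =>
          kern d c s2 p.1 p.2 * g p.2) :=
      ((kern_cont c s2).measurable.mul (hg.comp measurable_snd)).stronglyMeasurable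
    exact hu.integral_prod_right'
  -- pointwise Jensen
  have hJen : ∀ ξ, ou d c s2 ρ ξ * Real.log (ou d c s2 ρ ξ) ≤
      ou d c s2 (fun η => ρ η * Real.log (ρ η)) ξ := by
    intro ξ
    haveI := hνprob ξ
    rw [← hνint ξ ρ, ← hνint ξ (fun η => ρ η * Real.log (ρ η))]
    exact Real.convexOn_mul_log.map_integral_le Real.continuous_mul_log.continuousOn
      isClosed_Ici (Filter.Eventually.of_forall fun η => hpos η) (hρint ξ) (hφρint ξ)
  -- bounds
  have hou0 : ∀ ξ, 0 ≤ ou d c s2 ρ ξ := fun ξ =>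
    integral_nonneg fun η => mul_nonneg (kern_nonneg hs2 ξ η) (hpos η)
  have houC : ∀ ξ, ou d c s2 ρ ξ ≤ C := by
    intro ξ
    haveI := hνprob ξ
    rw [← hνint ξ ρ]
    calc ∫ η, ρ η ∂(ν ξ) ≤ ∫ _η, C ∂(ν ξ) :=
          integral_mono (hρint ξ) (integrable_const C) fun η => (hρmem η).2
    _ = C := by simp
  have houM : ∀ ξ, ‖ou d c s2 (fun η => ρ η * Real.log (ρ η)) ξ‖ ≤ M := by
    intro ξ
    haveI := hνprob ξ
    rw [← hνint ξ (fun η => ρ η * Real.log (ρ η))]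
    have := norm_integral_le_of_norm_le_const (μ := ν ξ)
      (f := fun η => ρ η * Real.log (ρ η)) (C := M)
      (Filter.Eventually.of_forall hφρ_bd)
    simpa using this
  -- integrability over the Gaussian
  have hIL : Integrable (fun ξ => ou d c s2 ρ ξ * Real.log (ou d c s2 ρ ξ)) (stdGauss d) := by
    have hm : Measurable (ou d c s2 ρ) := (hou_meas ρ hmeas).measurable
    refine (integrable_const M).mono'
      ((hm.mul (Real.measurable_log.comp hm)).aestronglyMeasurable)
      (Filter.Eventually.of_forall fun ξ => ?_)
    exact hM _ ⟨hou0 ξ, houC ξ⟩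
  have hIR : Integrable (ou d c s2 fun η => ρ η * Real.log (ρ η)) (stdGauss d) :=
    (integrable_const M).mono' (hou_meas _ hφρ_meas).aestronglyMeasurable
      (Filter.Eventually.of_forall houM)
  -- invariance of the Gaussian measure
  have hinv : ∫ ξ, ou d c s2 (fun η => ρ η * Real.log (ρ η)) ξ ∂(stdGauss d) =
      ∫ η, ρ η * Real.log (ρ η) ∂(stdGauss d) := by
    set g : EuclideanSpace ℝ (Fin d) → ℝ := fun η => ρ η * Real.log (ρ η) with hgdef
    rw [hsg, hsg]
    have hGmeas : Measurable fun p : EuclideanSpace ℝ (Fin d) × EuclideanSpace ℝ (Fin d) =>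
        γ p.1 * kern d c s2 p.1 p.2 :=
      ((hγcont.comp continuous_fst).mul (kern_cont c s2)).measurable
    have hGint : Integrable
        (fun p : EuclideanSpace ℝ (Fin d) × EuclideanSpace ℝ (Fin d) =>
          γ p.1 * kern d c s2 p.1 p.2) (volume.prod volume) := by
      rw [integrable_prod_iff hGmeas.aestronglyMeasurable]
      constructor
      · exact Filter.Eventually.of_forall fun ξ =>
          ((kern_integrable hs2 ξ).const_mul (γ ξ))
      · have heq : (fun ξ => ∫ η, ‖γ ξ * kern d c s2 ξ η‖) = γ := by
          funext ξ
          have h1 : ∀ η, ‖γ ξ * kern d c s2 ξ η‖ = γ ξ * kern d c s2 ξ η := fun η => by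
            rw [Real.norm_eq_abs,
              abs_of_nonneg (mul_nonneg (hγnn ξ) (kern_nonneg hs2 ξ η))]
          simp_rw [h1]
          rw [integral_const_mul, kern_norm hs2 ξ, mul_one]
        rw [heq]
        exact hγint
    have hFmeas : AEStronglyMeasurable
        (Function.uncurry fun ξ η => γ ξ * (kern d c s2 ξ η * g η))
        (volume.prod volume) := by
      apply Measurable.aestronglyMeasurable
      exact (hγcont.comp continuous_fst).measurable.mul
        ((kern_cont c s2).measurable.mul (hφρ_meas.comp measurable_snd))
    have hF : Integrable (Function.uncurry fun ξ η => γ ξ * (kern d c s2 ξ η * g η))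
        (volume.prod volume) := by
      refine (hGint.const_mul M).mono' hFmeas (Filter.Eventually.of_forall fun p => ?_)
      have hg := hφρ_bd p.2
      have h1 : ‖Function.uncurry (fun ξ η => γ ξ * (kern d c s2 ξ η * g η)) p‖ =
          γ p.1 * (kern d c s2 p.1 p.2 * |g p.2|) := by
        simp only [Function.uncurry, norm_mul, Real.norm_eq_abs,
          abs_of_nonneg (hγnn p.1), abs_of_nonneg (kern_nonneg hs2 p.1 p.2)]
      rw [h1]
      rw [Real.norm_eq_abs] at hg
      have h2 : γ p.1 * (kern d c s2 p.1 p.2 * |g p.2|) ≤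
          γ p.1 * (kern d c s2 p.1 p.2 * M) := by
        have h3 := hγnn p.1
        have h4 := kern_nonneg (c := c) hs2 p.1 p.2
        gcongr
      calc γ p.1 * (kern d c s2 p.1 p.2 * |g p.2|) ≤
          γ p.1 * (kern d c s2 p.1 p.2 * M) := h2
      _ = M * (γ p.1 * kern d c s2 p.1 p.2) := by ring
    calc ∫ ξ, γ ξ * ou d c s2 g ξ
        = ∫ ξ, ∫ η, γ ξ * (kern d c s2 ξ η * g η) := by
          congr 1
          funext ξ
          exact (integral_const_mul _ _).symm
      _ = ∫ η, ∫ ξ, γ ξ * (kern d c s2 ξ η * g η) := integral_integral_swap hF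
      _ = ∫ η, γ η * g η := by
          congr 1
          funext η
          have hpt : ∀ ξ, γ ξ * (kern d c s2 ξ η * g η) =
              (γ η * kern d c s2 η ξ) * g η := by
            intro ξ
            rw [← mul_assoc, aux_gk hs2 hc2 ξ η]
          simp_rw [hpt, mul_assoc, integral_const_mul, integral_mul_const,
            kern_norm hs2 η]
          ring
  calc ∫ ξ, ou d c s2 ρ ξ * Real.log (ou d c s2 ρ ξ) ∂(stdGauss d)
      ≤ ∫ ξ, ou d c s2 (fun η => ρ η * Real.log (ρ η)) ξ ∂(stdGauss d) :=
        integral_mono hIL hIR hJen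
    _ = ∫ ξ, ρ ξ * Real.log (ρ ξ) ∂(stdGauss d) := hinv

theorem stmt5 (d : ℕ) (ρ : EuclideanSpace ℝ (Fin d) → ℝ)
    (hmeas : Measurable ρ) (hpos : ∀ ξ, 0 ≤ ρ ξ) (hbd : ∃ C, ∀ ξ, |ρ ξ| ≤ C)
    (t : ℝ) (ht : 0 < t) :
    ∫ ξ, mehler d t ρ ξ * Real.log (mehler d t ρ ξ) ∂(stdGauss d) ≤
      ∫ ξ, ρ ξ * Real.log (ρ ξ) ∂(stdGauss d) := by
  obtain ⟨C, hC⟩ := hbd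
  have hs2 : 0 < 1 - rexp (-2 * t) := by
    have : rexp (-2 * t) < 1 := Real.exp_lt_one_iff.mpr (by linarith)
    linarith
  have hc2 : rexp (-t) ^ 2 = 1 - (1 - rexp (-2 * t)) := by
    rw [sub_sub_cancel, sq, ← Real.exp_add]
    congr 1
    ring
  have hme : ∀ (g : EuclideanSpace ℝ (Fin d) → ℝ) ξ,
      mehler d t g ξ = ou d (rexp (-t)) (1 - rexp (-2 * t)) g ξ := by
    intro g ξ
    unfold mehler ou kern
    rw [← integral_const_mul]
    congr 1
    funext η
    ring
  simp only [hme]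
  exact key d ρ hmeas hpos C hC _ _ hs2 hc2
end
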